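/- Let p_1,…,p_{N_s} > 0 and P = ∑_{j=1}^{N_s} p_j. Suppose (x_1^{BL},…,x_{N_s}^{BL}, t*) is an optimal solution of the block-level SB slot-variant problem with budget P (maximize t subject to CI_i(x_i, t) for all i and ∑_i ‖x_i‖² ≤ P), with t* > 0 and x_i^{BL} ≠ 0 for every i. Then for each i, the pair ( √(p_i/‖x_i^{BL}‖²)·x_i^{BL}, √(p_i)·t*/‖x_i^{BL}‖ ) is an optimal solution of the SB-SLP problem in slot i with budget p_i: it is feasible, and every pair (x, t) with CI_i(x, t) and ‖x‖² ≤ p_i satisfies t ≤ √(p_i)·t*/‖x_i^{BL}‖. -/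

import Mathlib

open scoped BigOperators

/-- The constructive-interference (CI) constraint in a given symbol slot:
`CI Nt Nr M h s γ σ x t` holds iff for every user `k`,
`Re((h_kᵀ x)/s_k) − |Im((h_kᵀ x)/s_k)| / tan(π/M) ≥ t·√(γ_k)·σ`. -/
noncomputable def CI (Nt Nr M : ℕ) (h : Fin Nr → Fin Nt → ℂ)
    (s : Fin Nr → ℂ) (γ : Fin Nr → ℝ) (σ : ℝ)
    (x : Fin Nt → ℂ) (t : ℝ) : Prop :=
  ∀ k : Fin Nr,
    ((∑ j, h k j * x j) / s k).re -
        |((∑ j, h k j * x j) / s k).im| / Real.tan (Real.pi / M) ≥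
      t * Real.sqrt (γ k) * σ

/-!
Both halves rest on the positive homogeneity of the CI constraint: scaling the precoder by
`c ≥ 0` scales the achievable margin by `c` and the power by `c²`. Rescaling `xᵢ^{BL}` thus gives
feasibility. For optimality, an optimal block must spend in slot `i` the least power with which
margin `t*` is attainable there: otherwise swapping in a cheaper slot precoder leaves power to
spare, and scaling the whole block up would beat `t*`. Homogeneity then turns this minimal power
into the optimal margin `√pᵢ · t* / ‖xᵢ^{BL}‖` under budget `pᵢ`.
-/

open Finset

theorem sum_norm_sq_smul {ι E : Type*} [Fintype ι] [SeminormedAddCommGroup E] [NormedSpace ℝ E]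
    (c : ℝ) (x : ι → E) : ∑ j, ‖(c • x) j‖ ^ 2 = c ^ 2 * ∑ j, ‖x j‖ ^ 2 := by
  simp only [Pi.smul_apply, norm_smul, mul_pow, Real.norm_eq_abs, sq_abs, mul_sum]

theorem sum_norm_sq_pos {ι E : Type*} [Fintype ι] [NormedAddCommGroup E] {x : ι → E}
    (hx : x ≠ 0) : 0 < ∑ j, ‖x j‖ ^ 2 := by
  obtain ⟨j, hj⟩ := Function.ne_iff.mp hx
  exact sum_pos' (fun _ _ => by positivity) ⟨j, mem_univ j, pow_pos (norm_pos_iff.mpr hj) 2⟩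

theorem exists_one_lt_mul_le_of_lt {E P : ℝ} (hE : 0 ≤ E) (hEP : E < P) :
    ∃ c, 1 < c ∧ c * E ≤ P := by
  have hm : 0 < max E (P / 2) := lt_max_of_lt_right (by linarith)
  refine ⟨P / max E (P / 2), (one_lt_div hm).2 (max_lt hEP (by linarith)), ?_⟩
  rw [div_mul_eq_mul_div, div_le_iff₀ hm]
  exact mul_le_mul_of_nonneg_left (le_max_left _ _) (by linarith)

section Slot

variable {Nt Nr M : ℕ} {h : Fin Nr → Fin Nt → ℂ} {s : Fin Nr → ℂ} {γ : Fin Nr → ℝ} {σ : ℝ}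

theorem CI.smul {x : Fin Nt → ℂ} {t c : ℝ} (hx : CI Nt Nr M h s γ σ x t) (hc : 0 ≤ c) :
    CI Nt Nr M h s γ σ (c • x) (c * t) := by
  intro k
  have hlin : (∑ j, h k j * (c • x) j) / s k = c * ((∑ j, h k j * x j) / s k) := by
    simp only [Pi.smul_apply, Complex.real_smul, mul_left_comm _ (c : ℂ), ← mul_sum,
      mul_div_assoc]
  rw [hlin, Complex.re_ofReal_mul, Complex.im_ofReal_mul, abs_mul, abs_of_nonneg hc,
    mul_div_assoc, ← mul_sub, ge_iff_le, mul_assoc c, mul_assoc c]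
  exact mul_le_mul_of_nonneg_left (hx k) hc

theorem CI.le_sqrt_mul_div_sqrt {x : Fin Nt → ℂ} {u p t n : ℝ} (ht : 0 < t) (hn : 0 < n)
    (hmin : ∀ y, CI Nt Nr M h s γ σ y t → n ≤ ∑ j, ‖y j‖ ^ 2)
    (hx : CI Nt Nr M h s γ σ x u) (hxp : ∑ j, ‖x j‖ ^ 2 ≤ p) :
    u ≤ √p * t / √n := by
  rcases le_or_gt u 0 with hu | hu
  · exact hu.trans (by positivity)
  have hy : CI Nt Nr M h s γ σ ((t / u) • x) t := by
    simpa only [div_mul_cancel₀ t hu.ne'] using hx.smul (c := t / u) (by positivity)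
  have hnp : n ≤ (t / u) ^ 2 * p := by
    calc n ≤ ∑ j, ‖((t / u) • x) j‖ ^ 2 := hmin _ hy
      _ = (t / u) ^ 2 * ∑ j, ‖x j‖ ^ 2 := sum_norm_sq_smul _ _
      _ ≤ (t / u) ^ 2 * p := by gcongr
  rw [div_pow, div_mul_eq_mul_div, le_div_iff₀ (by positivity)] at hnp
  rw [le_div_iff₀ (Real.sqrt_pos.2 hn)]
  apply le_of_pow_le_pow_left₀ two_ne_zero (by positivity)
  have hp : 0 ≤ p := (sum_nonneg fun _ _ => by positivity).trans hxp
  rw [mul_pow, mul_pow, Real.sq_sqrt hn.le, Real.sq_sqrt hp]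
  linarith

end Slot

section Block

variable {Nt Nr M : ℕ} {h : Fin Nr → Fin Nt → ℂ} {ι : Type*} [Fintype ι]
  {s : Fin Nr → ι → ℂ} {γ : Fin Nr → ι → ℝ} {σ P t : ℝ}

theorem exists_CI_gt_of_sum_norm_sq_lt {X : ι → Fin Nt → ℂ} (ht : 0 < t)
    (hX : ∀ i, CI Nt Nr M h (fun k => s k i) (fun k => γ k i) σ (X i) t)
    (hP : ∑ i, ∑ j, ‖X i j‖ ^ 2 < P) :
    ∃ (Y : ι → Fin Nt → ℂ) (u : ℝ),
      (∀ i, CI Nt Nr M h (fun k => s k i) (fun k => γ k i) σ (Y i) u) ∧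
      ∑ i, ∑ j, ‖Y i j‖ ^ 2 ≤ P ∧ t < u := by
  obtain ⟨c, hc1, hcP⟩ := exists_one_lt_mul_le_of_lt (by positivity) hP
  refine ⟨fun i => √c • X i, √c * t, fun i => (hX i).smul (Real.sqrt_nonneg c), ?_, ?_⟩
  · simpa only [sum_norm_sq_smul, ← mul_sum, Real.sq_sqrt (by linarith : 0 ≤ c)] using hcP
  · exact lt_mul_of_one_lt_left ht (Real.lt_sqrt_of_sq_lt (by simpa using hc1))

theorem sum_norm_sq_le_of_optimal [DecidableEq ι] {X : ι → Fin Nt → ℂ} (ht : 0 < t)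
    (hX : ∀ i, CI Nt Nr M h (fun k => s k i) (fun k => γ k i) σ (X i) t)
    (hpow : ∑ i, ∑ j, ‖X i j‖ ^ 2 ≤ P)
    (hopt : ∀ (Y : ι → Fin Nt → ℂ) (u : ℝ),
      (∀ i, CI Nt Nr M h (fun k => s k i) (fun k => γ k i) σ (Y i) u) →
      ∑ i, ∑ j, ‖Y i j‖ ^ 2 ≤ P → u ≤ t)
    (i : ι) {y : Fin Nt → ℂ} (hy : CI Nt Nr M h (fun k => s k i) (fun k => γ k i) σ y t) :
    ∑ j, ‖X i j‖ ^ 2 ≤ ∑ j, ‖y j‖ ^ 2 := by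
  by_contra! hlt
  have hXy : ∀ l,
      CI Nt Nr M h (fun k => s k l) (fun k => γ k l) σ (Function.update X i y l) t := by
    intro l
    rcases eq_or_ne l i with rfl | hl
    · simpa using hy
    · simpa [hl] using hX l
  have hpowXy : ∑ l, ∑ j, ‖Function.update X i y l j‖ ^ 2 < P := by
    refine lt_of_lt_of_le (sum_lt_sum (fun l _ => ?_) ⟨i, mem_univ i, by simpa using hlt⟩) hpow
    rcases eq_or_ne l i with rfl | hl
    · simpa using hlt.le
    · simp [hl]
  obtain ⟨Y, u, hY, hYP, htu⟩ := exists_CI_gt_of_sum_norm_sq_lt ht hXy hpowXy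
  exact (hopt Y u hY hYP).not_gt htu

end Block

theorem stmt8_general (Nt Nr Ns M : ℕ)
    (h : Fin Nr → Fin Nt → ℂ)
    (s : Fin Nr → Fin Ns → ℂ)
    (γ : Fin Nr → Fin Ns → ℝ)
    (σ : ℝ)
    (p : Fin Ns → ℝ) (hp : ∀ i, 0 < p i)
    (xBL : Fin Ns → Fin Nt → ℂ) (tstar : ℝ) (htstar : 0 < tstar)
    (hx0 : ∀ i, xBL i ≠ 0)
    (hfeas : ∀ i, CI Nt Nr M h (fun k => s k i) (fun k => γ k i) σ (xBL i) tstar)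
    (hpow : ∑ i, ∑ j, ‖xBL i j‖ ^ 2 ≤ ∑ j, p j)
    (hopt : ∀ (x : Fin Ns → Fin Nt → ℂ) (u : ℝ),
      (∀ i, CI Nt Nr M h (fun k => s k i) (fun k => γ k i) σ (x i) u) →
      (∑ i, ∑ j, ‖x i j‖ ^ 2 ≤ ∑ j, p j) → u ≤ tstar) :
    ∀ i,
      CI Nt Nr M h (fun k => s k i) (fun k => γ k i) σ
        (Real.sqrt (p i / ∑ j, ‖xBL i j‖ ^ 2) • xBL i)
        (Real.sqrt (p i) * tstar / Real.sqrt (∑ j, ‖xBL i j‖ ^ 2)) ∧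
      (∑ j, ‖(Real.sqrt (p i / ∑ j, ‖xBL i j‖ ^ 2) • xBL i) j‖ ^ 2 ≤ p i) ∧
      (∀ (x : Fin Nt → ℂ) (u : ℝ),
        CI Nt Nr M h (fun k => s k i) (fun k => γ k i) σ x u →
        (∑ j, ‖x j‖ ^ 2 ≤ p i) →
        u ≤ Real.sqrt (p i) * tstar / Real.sqrt (∑ j, ‖xBL i j‖ ^ 2)) := by
  intro i
  have hn : 0 < ∑ j, ‖xBL i j‖ ^ 2 := sum_norm_sq_pos (hx0 i)
  have hscale : √(p i / ∑ j, ‖xBL i j‖ ^ 2) * tstar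
      = √(p i) * tstar / √(∑ j, ‖xBL i j‖ ^ 2) := by
    rw [Real.sqrt_div (hp i).le]; ring
  refine ⟨hscale ▸ (hfeas i).smul (Real.sqrt_nonneg _), ?_, fun x u hx hxp => ?_⟩
  · rw [sum_norm_sq_smul, Real.sq_sqrt (div_nonneg (hp i).le hn.le), div_mul_cancel₀ _ hn.ne']
  · exact hx.le_sqrt_mul_div_sqrt htstar hn
      (fun y hy => sum_norm_sq_le_of_optimal htstar hfeas hpow hopt i hy) hxp

/-- From a block-level SB slot-variant optimum `(x^{BL}, t*)` with budget
`P = ∑pⱼ`, `t* > 0` and all `xᵢ^{BL} ≠ 0`, each rescaled pair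
`(√(pᵢ/‖xᵢ^{BL}‖²)·xᵢ^{BL}, √(pᵢ)·t*/‖xᵢ^{BL}‖)` is an SB-SLP optimum for
slot `i` with budget `pᵢ`. -/
theorem stmt8 (Nt Nr Ns M : ℕ) (hNt : 0 < Nt) (hNr : 0 < Nr) (hNs : 0 < Ns)
    (hM : 3 ≤ M)
    (h : Fin Nr → Fin Nt → ℂ)
    (s : Fin Nr → Fin Ns → ℂ) (hs : ∀ k i, s k i ≠ 0)
    (γ : Fin Nr → Fin Ns → ℝ) (hγ : ∀ k i, 0 ≤ γ k i)
    (σ : ℝ) (hσ : 0 < σ)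
    (p : Fin Ns → ℝ) (hp : ∀ i, 0 < p i)
    (xBL : Fin Ns → Fin Nt → ℂ) (tstar : ℝ) (htstar : 0 < tstar)
    (hx0 : ∀ i, xBL i ≠ 0)
    (hfeas : ∀ i, CI Nt Nr M h (fun k => s k i) (fun k => γ k i) σ (xBL i) tstar)
    (hpow : ∑ i, ∑ j, ‖xBL i j‖ ^ 2 ≤ ∑ j, p j)
    (hopt : ∀ (x : Fin Ns → Fin Nt → ℂ) (u : ℝ),
      (∀ i, CI Nt Nr M h (fun k => s k i) (fun k => γ k i) σ (x i) u) →
      (∑ i, ∑ j, ‖x i j‖ ^ 2 ≤ ∑ j, p j) → u ≤ tstar) :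
    ∀ i,
      CI Nt Nr M h (fun k => s k i) (fun k => γ k i) σ
        (Real.sqrt (p i / ∑ j, ‖xBL i j‖ ^ 2) • xBL i)
        (Real.sqrt (p i) * tstar / Real.sqrt (∑ j, ‖xBL i j‖ ^ 2)) ∧
      (∑ j, ‖(Real.sqrt (p i / ∑ j, ‖xBL i j‖ ^ 2) • xBL i) j‖ ^ 2 ≤ p i) ∧
      (∀ (x : Fin Nt → ℂ) (u : ℝ),
        CI Nt Nr M h (fun k => s k i) (fun k => γ k i) σ x u →
        (∑ j, ‖x j‖ ^ 2 ≤ p i) →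
        u ≤ Real.sqrt (p i) * tstar / Real.sqrt (∑ j, ‖xBL i j‖ ^ 2)) :=
  stmt8_general Nt Nr Ns M h s γ σ p hp xBL tstar htstar hx0 hfeas hpow hopt
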